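/- arXiv:1304.7887 — 2 statements merged into one kernel-verified Lean document; each statement's English description precedes it below -/
import Mathlib

section
/- If a differentiable function μ : [0,∞) → ℝ satisfies μ'(t) ≤ -2μ(t)²/H(t)² + 2(n-1)μ(t)/H(t)² where H is a positive function bounded above and below by positive constants, then μ is uniformly bounded from above on [0,∞). -/
/-- If μ is differentiable and satisfies the Riccati-type inequality
μ' ≤ -2μ²/H² + 2(n-1)μ/H² with 0 < h₀ ≤ H ≤ h₁, then μ is uniformly bounded
from above on [0,∞). -/
theorem stmt10 (n : ℕ) (hn : 2 ≤ n) (H μ : ℝ → ℝ) (h₀ h₁ : ℝ) (hh₀ : 0 < h₀)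
    (hH : ∀ t : ℝ, 0 ≤ t → h₀ ≤ H t ∧ H t ≤ h₁)
    (hdiff : Differentiable ℝ μ)
    (hineq : ∀ t : ℝ, 0 ≤ t →
      deriv μ t ≤ -2 * (μ t) ^ 2 / (H t) ^ 2 + 2 * ((n : ℝ) - 1) * μ t / (H t) ^ 2) :
    ∃ C : ℝ, ∀ t : ℝ, 0 ≤ t → μ t ≤ C := by
  set C : ℝ := max (μ 0) ((n : ℝ) - 1) + 1 with hC
  refine ⟨C, fun t ht => ?_⟩
  have key : ∀ ⦃x⦄, x ∈ Set.Icc (0 : ℝ) t → μ x ≤ (fun _ : ℝ => C) x := by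
    refine image_le_of_deriv_right_lt_deriv_boundary (B := fun _ => C) (f' := deriv μ) (B' := fun _ => 0) ?_ ?_ ?_ ?_ ?_
    · exact hdiff.continuous.continuousOn
    · intro x _
      exact (hdiff x).hasDerivAt.hasDerivWithinAt
    · have : μ 0 ≤ max (μ 0) ((n : ℝ) - 1) := le_max_left _ _
      linarith
    · intro x; exact hasDerivAt_const x C
    · intro x hx hfx
      have hx0 : (0 : ℝ) ≤ x := hx.1
      have hH0 : h₀ ≤ H x := (hH x hx0).1
      have hHx : 0 < H x := lt_of_lt_of_le hh₀ hH0
      have hHpos : 0 < (H x) ^ 2 := by positivity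
      have hn1 : (2 : ℝ) ≤ (n : ℝ) := by exact_mod_cast hn
      have hμx : μ x = C := hfx
      have hμge : (n : ℝ) - 1 + 1 ≤ μ x := by
        rw [hμx, hC]
        have := le_max_right (μ 0) ((n : ℝ) - 1)
        linarith
      have hμpos : 0 < μ x := by linarith
      calc deriv μ x ≤ -2 * (μ x) ^ 2 / (H x) ^ 2 + 2 * ((n : ℝ) - 1) * μ x / (H x) ^ 2 :=
            hineq x hx0
        _ = 2 * μ x * (((n : ℝ) - 1) - μ x) / (H x) ^ 2 := by ring
        _ < 0 := by
            apply div_neg_of_neg_of_pos _ hHpos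
            have : ((n : ℝ) - 1) - μ x ≤ -1 := by linarith
            nlinarith
  exact key ⟨ht, le_refl t⟩
end

section
/- If a positive differentiable function τ : [0,∞) → ℝ, uniformly bounded above, satisfies τ'(t) ≤ (2/(n-1))τ(t) - 2τ(t)² + C e^{-2t/(n-1)} whenever τ(t) ≥ 1/(n-1), then τ(t) ≤ 1/(n-1) + C' t e^{-2t/(n-1)} for some constant C' > 0 and all large t. -/
/-- Barrier lemma: if `h 0 ≤ 0` and `h' ≤ 0` wherever `h ≥ 0` (on `[0,∞)`),
then `h ≤ 0` on `[0,∞)`. -/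
lemma aux_nonpos19 (h : ℝ → ℝ) (hd : Differentiable ℝ h) (h0 : h 0 ≤ 0)
    (hder : ∀ t, 0 ≤ t → 0 ≤ h t → deriv h t ≤ 0) :
    ∀ t, 0 ≤ t → h t ≤ 0 := by
  intro t₁ ht₁
  by_contra hpos
  push_neg at hpos
  set S : Set ℝ := {t | t ∈ Set.Icc (0:ℝ) t₁ ∧ h t ≤ 0} with hS
  have hne : S.Nonempty := ⟨0, ⟨le_refl 0, ht₁⟩, h0⟩
  have hbdd : BddAbove S := ⟨t₁, fun x hx => hx.1.2⟩
  set s := sSup S with hs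
  have hs0 : 0 ≤ s := le_csSup hbdd ⟨⟨le_refl 0, ht₁⟩, h0⟩
  have hst : s ≤ t₁ := csSup_le hne fun x hx => hx.1.2
  have hhs : h s ≤ 0 := by
    have hcl : s ∈ closure S := csSup_mem_closure hne hbdd
    have hsub : closure S ⊆ {t | h t ≤ 0} :=
      closure_minimal (fun x hx => hx.2) (isClosed_le hd.continuous continuous_const)
    exact hsub hcl
  have hpos' : ∀ t ∈ Set.Ioc s t₁, 0 < h t := by
    intro t ht
    by_contra hc
    push_neg at hc
    have : t ∈ S := ⟨⟨hs0.trans ht.1.le, ht.2⟩, hc⟩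
    exact absurd (le_csSup hbdd this) (not_le.2 ht.1)
  have hanti : AntitoneOn h (Set.Icc s t₁) := by
    apply antitoneOn_of_deriv_nonpos (convex_Icc s t₁) hd.continuous.continuousOn
      (hd.differentiableOn)
    intro x hx
    rw [interior_Icc] at hx
    exact hder x (hs0.trans hx.1.le) (hpos' x ⟨hx.1, hx.2.le⟩).le
  have := hanti (Set.left_mem_Icc.2 hst) (Set.right_mem_Icc.2 hst) hst
  linarith

/-- If τ > 0 is differentiable, bounded above by M, and satisfies
τ' ≤ (2/(n-1))τ - 2τ² + C e^(-2t/(n-1)) whenever τ(t) ≥ 1/(n-1), then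
τ(t) ≤ 1/(n-1) + C' t e^(-2t/(n-1)) for some C' > 0 and all large t. -/
theorem stmt19 (n : ℕ) (hn : 2 ≤ n) (C M : ℝ) (hC : 0 ≤ C) (τ : ℝ → ℝ)
    (hdiff : Differentiable ℝ τ) (hpos : ∀ t : ℝ, 0 ≤ t → 0 < τ t)
    (hbdd : ∀ t : ℝ, 0 ≤ t → τ t ≤ M)
    (hineq : ∀ t : ℝ, 0 ≤ t → 1 / ((n : ℝ) - 1) ≤ τ t →
      deriv τ t ≤ (2 / ((n : ℝ) - 1)) * τ t - 2 * (τ t) ^ 2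
        + C * Real.exp (-2 * t / ((n : ℝ) - 1))) :
    ∃ C' : ℝ, 0 < C' ∧ ∃ T : ℝ, ∀ t : ℝ, T ≤ t →
      τ t ≤ 1 / ((n : ℝ) - 1) + C' * t * Real.exp (-2 * t / ((n : ℝ) - 1)) := by
  set a : ℝ := (n : ℝ) - 1 with ha
  have ha1 : (1:ℝ) ≤ a := by
    have : (2:ℝ) ≤ (n:ℝ) := by exact_mod_cast hn
    simp [ha]; linarith
  have ha0 : (0:ℝ) < a := by linarith
  -- the rescaled function
  set v : ℝ → ℝ := fun t => (τ t - 1 / a) * Real.exp (2 * t / a) with hv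
  have hexp : ∀ t : ℝ, Real.exp (-2 * t / a) = (Real.exp (2 * t / a))⁻¹ := by
    intro t
    rw [show (-2 * t / a) = -(2 * t / a) by ring, Real.exp_neg]
  -- derivative of v
  have hvderiv : ∀ t : ℝ, HasDerivAt v
      (deriv τ t * Real.exp (2 * t / a)
        + (τ t - 1 / a) * (Real.exp (2 * t / a) * (2 / a))) t := by
    intro t
    have hτ : HasDerivAt τ (deriv τ t) t := (hdiff t).hasDerivAt
    have hlin : HasDerivAt (fun t : ℝ => 2 * t / a) (2 / a) t := by
      simpa using (((hasDerivAt_id t).const_mul (2:ℝ)).div_const a)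
    have he : HasDerivAt (fun t : ℝ => Real.exp (2 * t / a))
        (Real.exp (2 * t / a) * (2 / a)) t := hlin.exp
    exact (hτ.sub_const (1 / a)).mul he
  have hvdiff : Differentiable ℝ v := fun t => (hvderiv t).differentiableAt
  -- v' ≤ C whenever v ≥ 0
  have hvle : ∀ t, 0 ≤ t → 0 ≤ v t → deriv v t ≤ C := by
    intro t ht hvt
    have hE : 0 < Real.exp (2 * t / a) := Real.exp_pos _
    have hτge : 1 / a ≤ τ t := by
      by_contra hc
      push_neg at hc
      have hneg : v t < 0 := mul_neg_of_neg_of_pos (by linarith) hE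
      linarith
    have hi := hineq t ht hτge
    rw [(hvderiv t).deriv]
    rw [hexp t] at hi
    have hinv : Real.exp (2 * t / a) * (Real.exp (2 * t / a))⁻¹ = 1 :=
      mul_inv_cancel₀ (ne_of_gt hE)
    have hmul := mul_le_mul_of_nonneg_right hi hE.le
    have key : (2 / a * τ t - 2 * τ t ^ 2 + 2 / a * (τ t - 1 / a))
        = -2 * (τ t - 1 / a) ^ 2 := by
      field_simp
      ring
    have key2 : (2 / a * τ t - 2 * τ t ^ 2 + 2 / a * (τ t - 1 / a))
        * Real.exp (2 * t / a) ≤ 0 := by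
      rw [key]
      nlinarith [mul_nonneg (sq_nonneg (τ t - 1 / a)) hE.le]
    nlinarith [hmul, key2, hinv]
  -- linear bound for v
  set K : ℝ := max (v 0) 0 with hK
  have hK0 : 0 ≤ K := le_max_right _ _
  have hvK : v 0 ≤ K := by rw [hK]; exact le_max_left _ _
  have hvlin : ∀ t, 0 ≤ t → v t ≤ K + C * t := by
    have haux := aux_nonpos19 (fun t => v t - (K + C * t))
      (hvdiff.sub ((differentiable_const K).add ((differentiable_id.const_mul C))))
      (by show v 0 - (K + C * 0) ≤ 0; linarith)
      (by
        intro t ht hh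
        have hh' : 0 ≤ v t - (K + C * t) := hh
        have hvt : 0 ≤ v t := by nlinarith [mul_nonneg hC ht]
        have hd1 : HasDerivAt (fun t => v t - (K + C * t)) (deriv v t - C) t := by
          have h2 : HasDerivAt (fun t : ℝ => K + C * t) C t := by
            simpa using ((hasDerivAt_id t).const_mul C).const_add K
          exact ((hvdiff t).hasDerivAt).sub h2
        rw [hd1.deriv]
        have := hvle t ht hvt
        linarith)
    intro t ht
    have h := haux t ht
    have h' : v t - (K + C * t) ≤ 0 := h
    linarith
  -- conclude
  refine ⟨K + C + 1, by linarith, 1, ?_⟩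
  intro t ht
  have ht0 : (0:ℝ) ≤ t := by linarith
  have hE : 0 < Real.exp (2 * t / a) := Real.exp_pos _
  have h1 : (τ t - 1 / a) * Real.exp (2 * t / a) ≤ K + C * t := hvlin t ht0
  have h2 : K + C * t ≤ (K + C + 1) * t := by nlinarith
  rw [hexp t]
  have hinv : Real.exp (2 * t / a) * (Real.exp (2 * t / a))⁻¹ = 1 :=
    mul_inv_cancel₀ (ne_of_gt hE)
  have hinvpos : 0 < (Real.exp (2 * t / a))⁻¹ := inv_pos.2 hE
  have h3 : τ t - 1 / a ≤ (K + C + 1) * t * (Real.exp (2 * t / a))⁻¹ := by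
    have h4 := mul_le_mul_of_nonneg_right (h1.trans h2) hinvpos.le
    calc τ t - 1 / a = (τ t - 1 / a)
          * (Real.exp (2 * t / a) * (Real.exp (2 * t / a))⁻¹) := by rw [hinv]; ring
      _ = (τ t - 1 / a) * Real.exp (2 * t / a) * (Real.exp (2 * t / a))⁻¹ := by ring
      _ ≤ (K + C + 1) * t * (Real.exp (2 * t / a))⁻¹ := h4
  linarith
end
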